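/- arXiv:2012.11258 — 2 statements merged into one kernel-verified Lean document; each statement's English description precedes it below -/
import Mathlib

section
/- The expected difference-rewards policy gradient equals the expected distributed policy gradient: E_{a∼π_θ(·|s)}[ΔR^i(a^i|s,a^{-i})·∇_{θ^i} log π_{θ^i}(a^i|s)] = E_{a∼π_θ(·|s)}[R(s,a)·∇_{θ^i} log π_{θ^i}(a^i|s)], where ΔR^i(a^i|s,a^{-i}) = R(s,a) − ∑_{b^i} π_{θ^i}(b^i|s) R(s,⟨a^{-i},b^i⟩) is the aristocrat-utility difference reward. -/
/-!
The aristocrat baseline `∑ bᵢ, πᵢ(bᵢ) R(⟨a⁻ⁱ, bᵢ⟩)` does not depend on agent `i`'s own action, and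
agents act independently, so its correlation with the score `∇ log πᵢ(aᵢ)` factors through the
expected score `∑ aᵢ, πᵢ(aᵢ) ∇ log πᵢ(aᵢ) = ∇ ∑ aᵢ, πᵢ(aᵢ) = ∇ 1 = 0`. Subtracting it from the
reward therefore leaves the expected gradient unchanged.
-/

theorem sum_mul_deriv_log_eq_zero {α : Type*} [Fintype α] (q : ℝ → α → ℝ) (t c : ℝ)
    (hdiff : ∀ x, DifferentiableAt ℝ (fun u => q u x) t) (hne : ∀ x, q t x ≠ 0)
    (hsum : ∀ u, ∑ x, q u x = c) :
    ∑ x, q t x * deriv (fun u => Real.log (q u x)) t = 0 := by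
  calc ∑ x, q t x * deriv (fun u => Real.log (q u x)) t
      = ∑ x, deriv (fun u => q u x) t := by
        refine Finset.sum_congr rfl fun x _ => ?_
        rw [deriv.log (hdiff x) (hne x), mul_div_cancel₀ _ (hne x)]
    _ = deriv (fun u => ∑ x, q u x) t := (deriv_fun_sum fun x _ => hdiff x).symm
    _ = 0 := by simp only [hsum, deriv_const]

theorem Function.update_eq_piSplitAt_symm {ι : Type*} [DecidableEq ι] {A : ι → Type*}
    (a : ∀ j, A j) (i : ι) (x : A i) :
    Function.update a i x = (Equiv.piSplitAt i A).symm (x, fun j => a j) := by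
  funext j
  by_cases h : j = i
  · subst h; simp
  · simp [h]

theorem Fintype.sum_prod_mul_mul_eq_sum_mul_sum {ι : Type*} [Fintype ι] [DecidableEq ι]
    {A : ι → Type*} [∀ j, Fintype (A j)] {M : Type*} [CommSemiring M]
    (p : ∀ j, A j → M) (i : ι) (f : A i → M) (g : (∀ j : {j // j ≠ i}, A j) → M) :
    ∑ a : ∀ j, A j, (∏ j, p j (a j)) * (f (a i) * g fun j => a j)
      = (∑ x, p i x * f x) * ∑ r, (∏ j : {j // j ≠ i}, p j (r j)) * g r := by
  rw [← (Equiv.piSplitAt i A).symm.sum_comp, Fintype.sum_prod_type, Finset.sum_mul_sum]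
  refine Finset.sum_congr rfl fun x _ => Finset.sum_congr rfl fun r _ => ?_
  have hsplit := (Equiv.piSplitAt i A).apply_symm_apply (x, r)
  simp only [Equiv.piSplitAt_apply, Prod.mk.injEq] at hsplit
  obtain ⟨hi, hrest⟩ := hsplit
  simp only [Fintype.prod_eq_mul_prod_subtype_ne _ i, hi, congrFun hrest]
  ring

/-- The expected difference-rewards policy gradient equals the expected
distributed policy gradient, where the difference reward uses the
aristocrat utility. -/
theorem diff_rewards_pg_eq_distributed_pg {S : Type*} {N : ℕ}
    {A : Fin N → Type*} [∀ j, Fintype (A j)]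
    (π : (j : Fin N) → ℝ → S → A j → ℝ) (θ : Fin N → ℝ)
    (R : S → (∀ j, A j) → ℝ) (i : Fin N) (s : S)
    (hdiff : ∀ j aj, DifferentiableAt ℝ (fun t => π j t s aj) (θ j))
    (hpos : ∀ j t aj, 0 < π j t s aj)
    (hsum : ∀ j t, ∑ aj, π j t s aj = 1) :
    ∑ a : ∀ j, A j, (∏ j, π j (θ j) s (a j)) *
      ((R s a - ∑ bi, π i (θ i) s bi * R s (Function.update a i bi)) *
        deriv (fun t => Real.log (π i t s (a i))) (θ i))
    = ∑ a : ∀ j, A j, (∏ j, π j (θ j) s (a j)) *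
        (R s a * deriv (fun t => Real.log (π i t s (a i))) (θ i)) := by
  have hscore : ∑ x, π i (θ i) s x * deriv (fun t => Real.log (π i t s x)) (θ i) = 0 :=
    sum_mul_deriv_log_eq_zero (fun t x => π i t s x) (θ i) 1 (hdiff i)
      (fun x => (hpos i _ x).ne') (hsum i)
  have hbaseline := Fintype.sum_prod_mul_mul_eq_sum_mul_sum (fun j => π j (θ j) s) i
    (fun x => deriv (fun t => Real.log (π i t s x)) (θ i))
    fun r => ∑ bi, π i (θ i) s bi * R s ((Equiv.piSplitAt i A).symm (bi, r))
  rw [hscore, zero_mul] at hbaseline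
  rw [eq_comm, ← sub_eq_zero, ← Finset.sum_sub_distrib, ← hbaseline]
  refine Finset.sum_congr rfl fun a _ => ?_
  simp only [Function.update_eq_piSplitAt_symm]
  ring
end

section
/- The sum over agents of the expected difference-rewards update targets equals the expected joint (centralized) policy gradient update: with θ = ⟨θ^1,…,θ^N⟩ and independent per-agent policies, E_{a∼π_θ(·|s)}[ (ΔR^1(a^1|s,a^{-1})∇_{θ^1}log π_{θ^1}(a^1|s), …, ΔR^N(a^N|s,a^{-N})∇_{θ^N}log π_{θ^N}(a^N|s)) ] = ∇_θ E_{a∼π_θ(·|s)}[R(s,a)], where the gradient on the right is with respect to all parameters jointly. -/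
/-! The derivative of the expected reward in `θ^i` only hits the `i`-th factor of the product
policy; writing `∇π_i = π_i ∇log π_i` turns it into the expectation of `R · ∇log π_i`. The
aristocrat baseline `∑_b π_i(b) R(a^{-i}, b)` does not depend on `a^i`, and the score
`∇log π_i` has mean zero under `π_i` (differentiate `∑ π_i = 1`), so subtracting the baseline
leaves the expectation unchanged. -/

open Finset Function

section

variable {ι : Type*} [DecidableEq ι]

theorem Finset.prod_erase_apply_update {M : Type*} [CommMonoid M] {β : ι → Type*}
    (s : Finset ι) (f : ∀ j, β j → M) (θ : ∀ j, β j) (i : ι) (t : β i) :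
    ∏ j ∈ s.erase i, f j (update θ i t j) = ∏ j ∈ s.erase i, f j (θ j) :=
  prod_congr rfl fun j hj => by rw [update_of_ne (ne_of_mem_erase hj)]

theorem Fintype.prod_apply_update [Fintype ι] {M : Type*} [CommMonoid M] {β : ι → Type*}
    (f : ∀ j, β j → M) (θ : ∀ j, β j) (i : ι) (t : β i) :
    ∏ j, f j (update θ i t j) = f i t * ∏ j ∈ univ.erase i, f j (θ j) := by
  rw [← mul_prod_erase univ _ (mem_univ i), update_self, univ.prod_erase_apply_update]

theorem Fintype.sum_apply_mul_eq_zero_of_update_invariant [Fintype ι] {R : Type*}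
    [NonUnitalNonAssocSemiring R] {A : ι → Type*} [∀ j, Fintype (A j)] (i : ι)
    {g : A i → R} {F : (∀ j, A j) → R} (hg : ∑ x, g x = 0)
    (hF : ∀ a x, F (update a i x) = F a) :
    ∑ a, g (a i) * F a = 0 := by
  rcases isEmpty_or_nonempty (A i) with _ | ⟨⟨x₀⟩⟩
  · have : IsEmpty (∀ j, A j) := ⟨fun a => isEmptyElim (a i)⟩
    simp
  let e := Equiv.piSplitAt i A
  have hsplit : ∀ x y, e.symm (x, y) = update (e.symm (x₀, y)) i x := by
    intro x y
    ext j
    by_cases hj : j = i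
    · subst hj; simp [e]
    · simp [e, hj]
  calc ∑ a, g (a i) * F a
        = ∑ p : A i × (∀ j : {j // j ≠ i}, A j), g p.1 * F (e.symm (x₀, p.2)) := by
        rw [← e.symm.sum_comp]
        refine Finset.sum_congr rfl fun ⟨x, y⟩ _ => ?_
        rw [hsplit x y, hF, update_self]
    _ = (∑ x, g x) * ∑ y, F (e.symm (x₀, y)) := by
        rw [Fintype.sum_prod_type, Fintype.sum_mul_sum]
    _ = 0 := by rw [hg, zero_mul]

end

theorem sum_deriv_eq_zero_of_sum_eq_const {𝕜 F α : Type*} [NontriviallyNormedField 𝕜]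
    [NormedAddCommGroup F] [NormedSpace 𝕜 F] [Fintype α] {f : 𝕜 → α → F} {t : 𝕜} {c : F}
    (hf : ∀ x, DifferentiableAt 𝕜 (f · x) t) (hc : ∀ t, ∑ x, f t x = c) :
    ∑ x, deriv (f · x) t = 0 := by
  rw [← deriv_fun_sum fun x _ => hf x]
  simp [hc]

/-- The stacked expected difference-rewards update targets (one per agent)
equal the stacked components of the joint policy gradient of the expected
reward. -/
theorem diff_rewards_eq_joint_gradient {S : Type*} {N : ℕ}
    {A : Fin N → Type*} [∀ j, Fintype (A j)]
    (π : (j : Fin N) → ℝ → S → A j → ℝ) (θ : Fin N → ℝ)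
    (R : S → (∀ j, A j) → ℝ) (s : S)
    (hdiff : ∀ j aj, DifferentiableAt ℝ (fun t => π j t s aj) (θ j))
    (hpos : ∀ j t aj, 0 < π j t s aj)
    (hsum : ∀ j t, ∑ aj, π j t s aj = 1) :
    (fun i : Fin N =>
      ∑ a : ∀ j, A j, (∏ j, π j (θ j) s (a j)) *
        ((R s a - ∑ bi, π i (θ i) s bi * R s (Function.update a i bi)) *
          deriv (fun t => Real.log (π i t s (a i))) (θ i)))
    = fun i : Fin N =>
        deriv (fun t =>
          ∑ a : ∀ j, A j,
            (∏ j, π j (Function.update θ i t j) s (a j)) * R s a) (θ i) := by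
  funext i
  set d : A i → ℝ := fun x => deriv (fun t => π i t s x) (θ i)
  set P : (∀ j, A j) → ℝ := fun a => ∏ j ∈ univ.erase i, π j (θ j) s (a j)
  set B : (∀ j, A j) → ℝ := fun a => ∑ b, π i (θ i) s b * R s (update a i b)
  have hjoint : ∀ t a, ∏ j, π j (update θ i t j) s (a j) = π i t s (a i) * P a :=
    fun t a => Fintype.prod_apply_update (fun j x => π j x s (a j)) θ i t
  have hgrad : deriv (fun t => ∑ a, (∏ j, π j (update θ i t j) s (a j)) * R s a) (θ i)
      = ∑ a, d (a i) * (P a * R s a) := by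
    simp_rw [hjoint, mul_assoc]
    rw [deriv_fun_sum fun a _ => (hdiff i (a i)).mul_const _]
    simp_rw [deriv_mul_const (hdiff i _)]
    rfl
  have hterm : ∀ a, (∏ j, π j (θ j) s (a j)) *
      ((R s a - B a) * deriv (fun t => Real.log (π i t s (a i))) (θ i))
      = d (a i) * (P a * R s a) - d (a i) * (P a * B a) := by
    intro a
    have hπ : π i (θ i) s (a i) ≠ 0 := (hpos i (θ i) (a i)).ne'
    rw [← update_eq_self i θ, hjoint, update_eq_self, deriv.log (hdiff i (a i)) hπ]
    field_simp
    ring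
  have hbaseline : ∑ a, d (a i) * (P a * B a) = 0 := by
    refine Fintype.sum_apply_mul_eq_zero_of_update_invariant i
      (sum_deriv_eq_zero_of_sum_eq_const (hdiff i) (hsum i)) fun a x => ?_
    simp only [P, B, update_idem, univ.prod_erase_apply_update (fun j y => π j (θ j) s y)]
  rw [hgrad, sum_congr rfl fun a _ => hterm a, sum_sub_distrib, hbaseline, sub_zero]
end
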